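/- arXiv:math/0409094 — 6 statements merged into one kernel-verified Lean document; each statement's English description precedes it below -/
import Mathlib

section
/- Let H be a group acting on a set S such that the stabilizer H_s of every s ∈ S is finite, and let Γ ≤ H be a subgroup of finite index. Then for every s ∈ S, Σ_O |H_s| / |Γ_{x_O}| = [H : Γ], where the sum runs over the Γ-orbits O contained in the H-orbit of s and x_O ∈ O is any representative (the order |Γ_{x_O}| does not depend on the choice of representative). In particular, this sum takes the same value for every s ∈ S. -/
open SimpleGraph MulAction
open scoped ENNReal

universe u

variable {V : Type u}

/-- The automorphism group of a simple graph, as a subgroup of the permutation group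
of its vertex set. -/
def SimpleGraph.autGroup (G : SimpleGraph V) : Subgroup (Equiv.Perm V) where
  carrier := {f | ∀ u v : V, G.Adj (f u) (f v) ↔ G.Adj u v}
  one_mem' := by intro u v; simp
  mul_mem' := by
    intro a b ha hb u v
    simp only [Set.mem_setOf_eq, Equiv.Perm.mul_apply] at *
    rw [ha, hb]
  inv_mem' := by
    intro a ha u v
    simpa using (ha (a⁻¹ u) (a⁻¹ v)).symm

/-- A subgroup of the permutation group of the vertices is discrete if all vertex
stabilizers are finite. -/
def IsDiscreteSubgroup (Γ : Subgroup (Equiv.Perm V)) : Prop :=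
  ∀ v : V, Finite (stabilizer Γ v)

/-- The `S`-covolume of a subgroup `Γ` of the permutation group of the vertices:
the sum of `1 / |Γ_v|` over the `Γ`-orbits meeting `S` (for `Γ`-invariant `S`, the
orbits contained in `S`), where `v` is a representative of the orbit. -/
noncomputable def covolume (Γ : Subgroup (Equiv.Perm V)) (S : Set V) : ℝ≥0∞ :=
  ∑' O : {O : Quotient (orbitRel Γ V) // Quotient.out O ∈ S},
    ((Nat.card (stabilizer Γ (Quotient.out (O : Quotient (orbitRel Γ V))))) : ℝ≥0∞)⁻¹

/-- A lattice: a discrete subgroup with finite covolume with respect to the set of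
all vertices. -/
def IsGraphLattice (Γ : Subgroup (Equiv.Perm V)) : Prop :=
  IsDiscreteSubgroup Γ ∧ covolume Γ Set.univ ≠ ⊤

/-- A nonuniform lattice: a lattice with infinitely many orbits of vertices. -/
def IsNonuniformLattice (Γ : Subgroup (Equiv.Perm V)) : Prop :=
  IsGraphLattice Γ ∧ Infinite (Quotient (orbitRel Γ V))

/-- `f ⪯ g` : there are `a, b` with `f k ≤ a * g (k + b)` for all `k`. -/
def GrowthLE (f g : ℕ → ℕ) : Prop :=
  ∃ a b : ℕ, ∀ k : ℕ, f k ≤ a * g (k + b)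

/-- Equivalence of growth types. -/
def GrowthEquiv (f g : ℕ → ℕ) : Prop :=
  GrowthLE f g ∧ GrowthLE g f

/-- The number of `Γ`-orbits of vertices meeting the ball of radius `k` about `x₀`. -/
noncomputable def quotientGrowth (G : SimpleGraph V) (Γ : Subgroup (Equiv.Perm V))
    (x₀ : V) (k : ℕ) : ℕ :=
  Nat.card {O : Quotient (orbitRel Γ V) //
    ∃ v : V, Quotient.mk (orbitRel Γ V) v = O ∧ G.dist v x₀ ≤ k}

/-- The maximal order of a `Γ`-stabilizer of a vertex in the ball of radius `k`
about `x₀`. -/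
noncomputable def stabilizerGrowth (G : SimpleGraph V) (Γ : Subgroup (Equiv.Perm V))
    (x₀ : V) (k : ℕ) : ℕ :=
  sSup {c : ℕ | ∃ v : V, G.dist v x₀ ≤ k ∧ c = Nat.card (stabilizer Γ v)}

/-- The `p`-order of a (finite) group order `k` : the largest power of `p` dividing `k`. -/
def pOrder (p k : ℕ) : ℕ := p ^ (k.factorization p)

/-- The maximal `p`-order of a `Γ`-stabilizer of a vertex in the ball of radius `k`
about `x₀`. -/
noncomputable def pStabilizerGrowth (G : SimpleGraph V) (Γ : Subgroup (Equiv.Perm V))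
    (p : ℕ) (x₀ : V) (k : ℕ) : ℕ :=
  sSup {c : ℕ | ∃ v : V, G.dist v x₀ ≤ k ∧ c = pOrder p (Nat.card (stabilizer Γ v))}

/-- `Γ` and `Γ'` are commensurable in (a subgroup) `A` of the permutation group:
some `A`-conjugate of `Γ` intersects `Γ'` in finite index in both. -/
def CommensurableIn {GG : Type u} [Group GG] (A Γ Γ' : Subgroup GG) : Prop :=
  ∃ g ∈ A, Subgroup.Commensurable (Subgroup.map (MulAut.conj g).toMonoidHom Γ) Γ'

/-- An `(m,n)`-biregular tree with parts `V₀`, `V₁`. -/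
structure IsBiregularTree (G : SimpleGraph V) (V₀ V₁ : Set V) (m n : ℕ) : Prop where
  connected : G.Connected
  acyclic : G.IsAcyclic
  disjoint : Disjoint V₀ V₁
  union : V₀ ∪ V₁ = Set.univ
  adj_parts : ∀ ⦃u v : V⦄, G.Adj u v → (u ∈ V₀ ∧ v ∈ V₁) ∨ (u ∈ V₁ ∧ v ∈ V₀)
  degree₀ : ∀ v ∈ V₀, (G.neighborSet v).Finite ∧ (G.neighborSet v).ncard = m
  degree₁ : ∀ v ∈ V₁, (G.neighborSet v).Finite ∧ (G.neighborSet v).ncard = n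

/-- A star tree of degree `m` with parts `V₀`, `V₁`. -/
structure IsStarTree (A : SimpleGraph V) (V₀ V₁ : Set V) (m : ℕ) : Prop where
  connected : A.Connected
  acyclic : A.IsAcyclic
  disjoint : Disjoint V₀ V₁
  union : V₀ ∪ V₁ = Set.univ
  adj_parts : ∀ ⦃u v : V⦄, A.Adj u v → (u ∈ V₀ ∧ v ∈ V₁) ∨ (u ∈ V₁ ∧ v ∈ V₀)
  degree₀ : ∀ v ∈ V₀, (A.neighborSet v).Finite ∧ (A.neighborSet v).ncard = m
  degree₁ : ∀ v ∈ V₁, (A.neighborSet v).Finite ∧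
    ((A.neighborSet v).ncard = 1 ∨ (A.neighborSet v).ncard = 2)

/-- The quotient graph `Γ\X`: vertices are `Γ`-orbits; two distinct orbits are
adjacent iff some vertex of one is adjacent to some vertex of the other. -/
def quotientGraph (G : SimpleGraph V) (Γ : Subgroup (Equiv.Perm V)) :
    SimpleGraph (Quotient (orbitRel Γ V)) where
  Adj O O' := O ≠ O' ∧ ∃ u v : V, Quotient.mk (orbitRel Γ V) u = O ∧
    Quotient.mk (orbitRel Γ V) v = O' ∧ G.Adj u v
  symm := ⟨by
    rintro O O' ⟨hne, u, v, hu, hv, huv⟩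
    exact ⟨hne.symm, v, u, hv, hu, huv.symm⟩⟩
  loopless := ⟨fun O h => h.1 rfl⟩

/-- An acceptable quotient growth function. -/
structure AcceptableGrowth (f : ℕ → ℕ) : Prop where
  base : f 0 = 1
  one_le : ∀ j : ℕ, 1 ≤ f (j + 1)
  le_two_mul : ∀ j : ℕ, f (j + 1) ≤ 2 * f j
  summable : Summable fun j : ℕ => (f j : ℝ) / 2 ^ j

/-- An `n`-admissible sequence `s`, indexed by `k ≥ 1`. -/
def NAdmissible (n : ℕ) (s : ℕ → ℕ) : Prop :=
  ∀ k : ℕ, 1 ≤ k → s k ∣ n ∧ 2 < s k ∧ s k ≤ n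

/-- The associated function `h j = (s 1 - 1) * ⋯ * (s j - 1)`, with `h 0 = 1`. -/
def admProd (s : ℕ → ℕ) (j : ℕ) : ℕ := ∏ i ∈ Finset.Icc 1 j, (s i - 1)

/-!
Send a coset `gΓ` to the `Γ`-orbit of `g⁻¹ • s`. The orbits reached are exactly those inside
`H • s`, and the fibre over the orbit of `h • s` is the `H_s`-orbit of the coset `h⁻¹Γ`, whose
stabilizer in `H_s` is conjugate by `h` to `Γ_{h • s}`. By orbit–stabilizer each fibre has
`|H_s| / |Γ_{h • s}|` elements, and the fibres partition the `[H : Γ]` cosets.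
-/

theorem ENNReal.tsum_natCard_fiber {α β : Type*} [Finite α] (f : α → β) :
    ∑' b, (Nat.card (f ⁻¹' {b}) : ℝ≥0∞) = Nat.card α := by
  simpa only [ENNReal.tsum_const, mul_one, ENat.card_eq_coe_natCard, ENat.toENNReal_coe] using
    ENNReal.tsum_fiberwise (fun _ => (1 : ℝ≥0∞)) f

namespace MulAction

theorem natCard_orbit_mul_natCard_stabilizer (G : Type*) {X : Type*} [Group G] [MulAction G X]
    (x : X) : Nat.card (orbit G x) * Nat.card (stabilizer G x) = Nat.card G := by
  rw [Nat.card_coe_set_eq, ← index_stabilizer, mul_comm, Subgroup.card_mul_index]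

variable {H S : Type*} [Group H] [MulAction H S] (Γ : Subgroup H) (s : S)

def orbitOfCoset : H ⧸ Γ → Quotient (orbitRel Γ S) :=
  Quotient.map' (fun g => g⁻¹ • s) fun g g' hg =>
    ⟨⟨g⁻¹ * g', QuotientGroup.leftRel_apply.mp hg⟩, by simp [mul_smul]⟩

@[simp]
theorem orbitOfCoset_mk (g : H) :
    orbitOfCoset Γ s g = Quotient.mk (orbitRel Γ S) (g⁻¹ • s) :=
  rfl

theorem out_orbitOfCoset_mem_orbit (q : H ⧸ Γ) : (orbitOfCoset Γ s q).out ∈ orbit H s := by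
  induction q using QuotientGroup.induction_on with
  | H g =>
    rw [← orbit_smul g⁻¹ s]
    exact mem_orbit_of_mem_orbit_subgroup (Quotient.mk_out (s := orbitRel Γ S) (g⁻¹ • s))

theorem orbitOfCoset_smul {a : H} (ha : a ∈ stabilizer H s) (q : H ⧸ Γ) :
    orbitOfCoset Γ s (a • q) = orbitOfCoset Γ s q := by
  induction q using QuotientGroup.induction_on with
  | H g => simp [mul_smul, inv_smul_eq_iff.mpr (mem_stabilizer_iff.mp ha).symm]

theorem orbitOfCoset_eq_iff (h : H) (q : H ⧸ Γ) :
    orbitOfCoset Γ s q = Quotient.mk (orbitRel Γ S) (h • s) ↔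
      q ∈ orbit (stabilizer H s) ((h⁻¹ : H) : H ⧸ Γ) := by
  constructor
  · induction q using QuotientGroup.induction_on with
    | H g =>
      intro hg
      obtain ⟨γ, hγ⟩ := orbitRel_apply.mp (Quotient.exact hg)
      have hγ' : (γ : H) • h • s = g⁻¹ • s := hγ
      refine ⟨⟨g * γ * h, ?_⟩, ?_⟩
      · rw [mem_stabilizer_iff, mul_smul, mul_smul, hγ', smul_inv_smul]
      · change (g * γ * h : H) • ((h⁻¹ : H) : H ⧸ Γ) = g
        rw [Quotient.smul_coe, smul_eq_mul, mul_inv_cancel_right,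
          QuotientGroup.mk_mul_of_mem g γ.2]
  · rintro ⟨a, rfl⟩
    change orbitOfCoset Γ s ((a : H) • ((h⁻¹ : H) : H ⧸ Γ)) = _
    rw [orbitOfCoset_smul Γ s a.2, orbitOfCoset_mk, inv_inv]

theorem smul_coe_inv_eq_iff (a h : H) : a • ((h⁻¹ : H) : H ⧸ Γ) = h⁻¹ ↔ h * a * h⁻¹ ∈ Γ := by
  rw [Quotient.smul_coe, smul_eq_mul, QuotientGroup.eq, ← Γ.inv_mem_iff]
  simp [mul_assoc]

theorem natCard_stabilizer_coe_inv (h : H) :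
    Nat.card (stabilizer (stabilizer H s) ((h⁻¹ : H) : H ⧸ Γ)) =
      Nat.card (stabilizer Γ (h • s)) := by
  refine Nat.card_congr
    { toFun := fun a => ⟨⟨h * a * h⁻¹, (smul_coe_inv_eq_iff Γ a h).mp a.2⟩, ?_⟩
      invFun := fun γ => ⟨⟨h⁻¹ * γ * h, ?_⟩, ?_⟩
      left_inv := fun a => by ext; simp [mul_assoc]
      right_inv := fun γ => by ext; simp [mul_assoc] }
  · change (h * a * h⁻¹) • h • s = h • s
    simp [mul_smul, mem_stabilizer_iff.mp a.1.2]
  · change (h⁻¹ * γ * h) • s = s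
    rw [mul_smul, mul_smul, show ((γ : Γ) : H) • h • s = h • s from γ.2, inv_smul_smul]
  · exact (smul_coe_inv_eq_iff Γ _ h).mpr (by simp [mul_assoc])

theorem natCard_fiber_orbitOfCoset_mul (h : H) :
    Nat.card (orbitOfCoset Γ s ⁻¹' {Quotient.mk (orbitRel Γ S) (h • s)}) *
      Nat.card (stabilizer Γ (h • s)) = Nat.card (stabilizer H s) := by
  have hfiber : orbitOfCoset Γ s ⁻¹' {Quotient.mk _ (h • s)} =
      orbit (stabilizer H s) ((h⁻¹ : H) : H ⧸ Γ) :=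
    Set.ext (orbitOfCoset_eq_iff Γ s h)
  rw [hfiber, ← natCard_stabilizer_coe_inv, natCard_orbit_mul_natCard_stabilizer]

end MulAction

/-- If a group `H` acts on a set `S` with finite stabilizers and
`Γ ≤ H` has finite index, then for every `s ∈ S` the sum of `|H_s| / |Γ_x|` over
the `Γ`-orbits contained in the `H`-orbit of `s` equals `[H : Γ]`; in particular
this sum is the same for every `s`. -/
theorem statement5 {H : Type u} [Group H] {S : Type u} [MulAction H S]
    (hfin : ∀ s : S, Finite (stabilizer H s))
    (Γ : Subgroup H) (hΓ : Γ.FiniteIndex) (s : S) :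
    ∑' O : {O : Quotient (orbitRel Γ S) // Quotient.out O ∈ orbit H s},
        (Nat.card (stabilizer H s) : ℝ≥0∞) /
          (Nat.card (stabilizer Γ (Quotient.out (O : Quotient (orbitRel Γ S)))) : ℝ≥0∞)
      = (Γ.index : ℝ≥0∞) := by
  let f (q : H ⧸ Γ) : {O : Quotient (orbitRel Γ S) // O.out ∈ orbit H s} :=
    ⟨orbitOfCoset Γ s q, out_orbitOfCoset_mem_orbit Γ s q⟩
  rw [Subgroup.index_eq_card, ← ENNReal.tsum_natCard_fiber f]
  refine tsum_congr fun ⟨O, h, hO⟩ => ?_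
  have hfiber : f ⁻¹' {⟨O, h, hO⟩} = orbitOfCoset Γ s ⁻¹' {Quotient.mk _ (h • s)} := by
    ext q
    simp [f, Subtype.ext_iff, hO]
  have hcard := natCard_fiber_orbitOfCoset_mul Γ s h
  have hK : Nat.card (stabilizer H s) ≠ 0 := have := hfin s; Nat.card_pos.ne'
  have hΓx : Nat.card (stabilizer Γ (h • s)) ≠ 0 := right_ne_zero_of_mul (hcard ▸ hK)
  change _ / (Nat.card (stabilizer Γ O.out) : ℝ≥0∞) = _
  rw [hfiber, ← hO, ← hcard, Nat.cast_mul,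
    ENNReal.mul_div_cancel_right (Nat.cast_ne_zero.mpr hΓx) (ENNReal.natCast_ne_top _)]
end

section
/- Let H be a group acting on a set S such that the stabilizer H_s of every s ∈ S is finite, and let Γ ≤ H be a subgroup of finite index d = [H : Γ]. Then Σ_{O ∈ Γ\S} 1/|Γ_{x_O}| = d · Σ_{O' ∈ H\S} 1/|H_{x_{O'}}| as elements of [0,∞], where the first sum runs over all Γ-orbits in S and the second over all H-orbits in S, with x_O, x_{O'} arbitrary representatives. -/
open SimpleGraph MulAction
open scoped ENNReal

universe u

variable {V : Type u}

/-!
Fix an `H`-orbit `H • x`. The map `hΓ ↦ Γ • h⁻¹x` sends `H ⧸ Γ` onto the `Γ`-orbits inside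
`H • x`, and its fibre over `Γ • y` is the orbit of the coset `Γ` under `H_y`, whose stabilizer
is `H_y ∩ Γ = Γ_y`. By orbit–stabilizer the fibre has `|H_y| / |Γ_y| = |H_x| / |Γ_y|` elements, so
`1 / |Γ_y|` is the fibre size divided by `|H_x|`; summing over the `Γ`-orbits inside `H • x`
counts every coset once and gives `[H : Γ] / |H_x|`.
-/

theorem ENNReal.inv_natCast_eq_mul_inv_of_mul_eq {a b c : ℕ} (h : a * b = c) (ha : a ≠ 0) :
    (b : ℝ≥0∞)⁻¹ = a * (c : ℝ≥0∞)⁻¹ := by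
  have ha' : (a : ℝ≥0∞) ≠ 0 := by exact_mod_cast ha
  subst h
  push_cast
  rw [ENNReal.mul_inv (.inl ha') (.inl (ENNReal.natCast_ne_top a)), ← mul_assoc,
    ENNReal.mul_inv_cancel ha' (ENNReal.natCast_ne_top a), one_mul]

namespace MulAction

variable {H S : Type*} [Group H] [MulAction H S]

theorem ncard_orbit_mul_card_stabilizer (x : S) :
    (orbit H x).ncard * Nat.card (stabilizer H x) = Nat.card H := by
  rw [← index_stabilizer, mul_comm, Subgroup.card_mul_index]

theorem card_stabilizer_eq_of_mem_orbit {x y : S} (h : y ∈ orbit H x) :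
    Nat.card (stabilizer H y) = Nat.card (stabilizer H x) := by
  obtain ⟨g, rfl⟩ := h
  exact (Nat.card_congr (stabilizerEquivStabilizer rfl).toEquiv).symm

variable (Γ : Subgroup H)

def subgroupOrbitMap : orbitRel.Quotient Γ S → orbitRel.Quotient H S :=
  Quotient.map' id fun _ _ => (orbitRel_subgroup_le Γ ·)

def cosetOrbit (x : S) : H ⧸ Γ → orbitRel.Quotient Γ S :=
  Quotient.map' (fun h => h⁻¹ • x) fun a b hab =>
    ⟨⟨a⁻¹ * b, QuotientGroup.leftRel_apply.mp hab⟩, by simp [mul_smul]⟩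

variable {Γ}

@[simp]
theorem cosetOrbit_mk (x : S) (h : H) :
    cosetOrbit Γ x h = Quotient.mk (orbitRel Γ S) (h⁻¹ • x) := rfl

theorem cosetOrbit_smul (g : H) (x : S) (c : H ⧸ Γ) :
    cosetOrbit Γ (g • x) (g • c) = cosetOrbit Γ x c := by
  induction c using QuotientGroup.induction_on with
  | H h =>
    show cosetOrbit Γ (g • x) ((g * h : H) : H ⧸ Γ) = _
    simp [mul_smul]

theorem subgroupOrbitMap_cosetOrbit (x : S) (c : H ⧸ Γ) :
    subgroupOrbitMap Γ (cosetOrbit Γ x c) = Quotient.mk (orbitRel H S) x := by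
  induction c using QuotientGroup.induction_on with
  | H h => exact Quotient.sound (mem_orbit x h⁻¹)

theorem cosetOrbit_eq_mk_self_iff (y : S) (c : H ⧸ Γ) :
    cosetOrbit Γ y c = Quotient.mk _ y ↔ c ∈ orbit (stabilizer H y) ((1 : H) : H ⧸ Γ) := by
  induction c using QuotientGroup.induction_on with
  | H h =>
    rw [cosetOrbit_mk, Quotient.eq, orbitRel_apply]
    constructor
    · rintro ⟨γ, hγ : (γ : H) • y = h⁻¹ • y⟩
      refine ⟨⟨h * γ, ?_⟩, ?_⟩
      · rw [mem_stabilizer_iff, mul_smul, hγ, smul_inv_smul]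
      · show ((h * γ * 1 : H) : H ⧸ Γ) = h
        simp
    · rintro ⟨k, hk : ((k * 1 : H) : H ⧸ Γ) = h⟩
      rw [mul_one, QuotientGroup.eq] at hk
      refine ⟨⟨h⁻¹ * k, by simpa using Γ.inv_mem hk⟩, ?_⟩
      show (h⁻¹ * k) • y = h⁻¹ • y
      rw [mul_smul, k.2]

theorem card_stabilizer_stabilizer_one (y : S) :
    Nat.card (stabilizer (stabilizer H y) ((1 : H) : H ⧸ Γ)) = Nat.card (stabilizer Γ y) :=
  Nat.card_congr
    { toFun k := ⟨⟨k.1.1, by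
        have hk : ((k.1.1 * 1 : H) : H ⧸ Γ) = ((1 : H) : H ⧸ Γ) := k.2
        simpa [QuotientGroup.eq] using hk⟩, k.1.2⟩
      invFun γ := ⟨⟨γ.1.1, γ.2⟩, show ((γ.1.1 * 1 : H) : H ⧸ Γ) = ((1 : H) : H ⧸ Γ) by
        simp [QuotientGroup.eq]⟩ }

theorem ncard_preimage_cosetOrbit_mul_card_stabilizer {x y : S} (hxy : y ∈ orbit H x) :
    (cosetOrbit Γ x ⁻¹' {Quotient.mk _ y}).ncard * Nat.card (stabilizer Γ y) =
      Nat.card (stabilizer H x) := by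
  obtain ⟨g, rfl⟩ := hxy
  have hfib : cosetOrbit Γ x ⁻¹' {Quotient.mk _ (g • x)} =
      (g • · : H ⧸ Γ → H ⧸ Γ) ⁻¹' orbit (stabilizer H (g • x)) ((1 : H) : H ⧸ Γ) := by
    ext c
    simp [← cosetOrbit_eq_mk_self_iff, cosetOrbit_smul]
  have hg : Function.Bijective (g • · : H ⧸ Γ → H ⧸ Γ) := MulAction.bijective g
  rw [hfib, Set.ncard_preimage_of_injective_subset_range hg.injective
      (hg.surjective.range_eq ▸ Set.subset_univ _),
    ← card_stabilizer_stabilizer_one, ncard_orbit_mul_card_stabilizer,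
    card_stabilizer_eq_of_mem_orbit (mem_orbit x g)]

theorem inv_card_stabilizer_eq_ncard_mul_inv [Finite (H ⧸ Γ)] {x y : S} (hxy : y ∈ orbit H x) :
    (Nat.card (stabilizer Γ y) : ℝ≥0∞)⁻¹ =
      (cosetOrbit Γ x ⁻¹' {Quotient.mk _ y}).ncard * (Nat.card (stabilizer H x) : ℝ≥0∞)⁻¹ := by
  refine ENNReal.inv_natCast_eq_mul_inv_of_mul_eq
    (ncard_preimage_cosetOrbit_mul_card_stabilizer hxy) ?_
  obtain ⟨g, rfl⟩ := hxy
  exact Set.ncard_ne_zero_of_mem (a := ((g⁻¹ : H) : H ⧸ Γ)) (by simp)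

theorem tsum_preimage_subgroupOrbitMap [Finite (H ⧸ Γ)] (O' : orbitRel.Quotient H S) :
    ∑' O : subgroupOrbitMap Γ ⁻¹' {O'},
        (Nat.card (stabilizer Γ (O : orbitRel.Quotient Γ S).out) : ℝ≥0∞)⁻¹
      = Γ.index * (Nat.card (stabilizer H O'.out) : ℝ≥0∞)⁻¹ := by
  set x := O'.out
  let p : H ⧸ Γ → subgroupOrbitMap Γ ⁻¹' {O'} := fun c =>
    ⟨cosetOrbit Γ x c, by simp [subgroupOrbitMap_cosetOrbit, x]⟩
  have hterm (O : subgroupOrbitMap Γ ⁻¹' {O'}) :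
      (Nat.card (stabilizer Γ (O : orbitRel.Quotient Γ S).out) : ℝ≥0∞)⁻¹ =
        ∑' _ : p ⁻¹' {O}, (Nat.card (stabilizer H x) : ℝ≥0∞)⁻¹ := by
    set y := (O : orbitRel.Quotient Γ S).out
    have hy : y ∈ orbit H x := by
      have hO : Quotient.mk (orbitRel H S) y = Quotient.mk _ x := by
        rw [Quotient.out_eq O', ← O.2, ← Quotient.out_eq O.1]
        rfl
      exact Quotient.exact hO
    have hfib : p ⁻¹' {O} = cosetOrbit Γ x ⁻¹' {Quotient.mk _ y} := by
      ext c
      simp [p, Subtype.ext_iff, y]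
    rw [ENNReal.tsum_const, ENat.card_eq_coe_natCard, ENat.toENNReal_coe, Nat.card_coe_set_eq,
      hfib, inv_card_stabilizer_eq_ncard_mul_inv hy]
  rw [tsum_congr hterm, ENNReal.tsum_fiberwise (fun _ => _) p]
  simp [ENNReal.tsum_const, ENat.card_eq_coe_natCard, Subgroup.index_eq_card]

end MulAction

theorem statement6_general {H : Type u} [Group H] {S : Type u} [MulAction H S]
    (Γ : Subgroup H) {d : ℕ} (hd : Γ.index = d) (hd0 : d ≠ 0) :
    ∑' O : Quotient (orbitRel Γ S),
        ((Nat.card (stabilizer Γ (Quotient.out O))) : ℝ≥0∞)⁻¹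
      = (d : ℝ≥0∞) *
        ∑' O' : Quotient (orbitRel H S),
          ((Nat.card (stabilizer H (Quotient.out O'))) : ℝ≥0∞)⁻¹ := by
  subst hd
  have : Γ.FiniteIndex := ⟨hd0⟩
  rw [← ENNReal.tsum_fiberwise _ (subgroupOrbitMap Γ), ← ENNReal.tsum_mul_left]
  exact tsum_congr tsum_preimage_subgroupOrbitMap

/-- If a group `H` acts on a set `S` with finite stabilizers and
`Γ ≤ H` has finite index `d`, then `Vol_S(Γ) = d · Vol_S(H)` as elements of
`[0,∞]`: the sum of `1/|Γ_x|` over `Γ`-orbits equals `d` times the sum of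
`1/|H_x|` over `H`-orbits. -/
theorem statement6 {H : Type u} [Group H] {S : Type u} [MulAction H S]
    (hfin : ∀ s : S, Finite (stabilizer H s))
    (Γ : Subgroup H) {d : ℕ} (hd : Γ.index = d) (hd0 : d ≠ 0) :
    ∑' O : Quotient (orbitRel Γ S),
        ((Nat.card (stabilizer Γ (Quotient.out O))) : ℝ≥0∞)⁻¹
      = (d : ℝ≥0∞) *
        ∑' O' : Quotient (orbitRel H S),
          ((Nat.card (stabilizer H (Quotient.out O'))) : ℝ≥0∞)⁻¹ :=
  statement6_general Γ hd hd0
end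

section
/- Let X be a locally finite tree (a connected, acyclic, locally finite simple graph) and fix a vertex x₀. For a subgroup Γ ≤ Aut(X) define g_Γ(k) = the number of Γ-orbits O of vertices with min_{v∈O} d(v,x₀) ≤ k (this is the number of vertices of the quotient graph Γ\X in the combinatorial ball of radius k about the image of x₀). If Γ and Γ' are lattices in Aut(X) (discrete subgroups of finite covolume) that are commensurable in Aut(X), then g_Γ ≃ g_{Γ'}. -/
open SimpleGraph MulAction
open scoped ENNReal

universe u

variable {V : Type u}

/-! The quotient growth at radius `k` counts the orbits meeting a finite ball. Moving the
basepoint from `x₀` to `x₁` changes the radius by at most `d(x₀, x₁)`, and conjugating `Γ` by an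
automorphism `g` amounts to moving the basepoint to `g⁻¹ x₀`. It remains to compare commensurable
`Γ, Γ'` at a common basepoint: if `t₁, …, tₙ` represent the cosets of `Γ ∩ Γ'` in `Γ'`, then every
`Γ'`-orbit `Γ' w` is covered by the `Γ`-orbits of `tᵢ⁻¹ w`, so each `Γ'`-orbit meeting the ball
accounts for at most `n = [Γ' : Γ ∩ Γ']` of the `Γ`-orbits meeting it. -/

section OrbitCount

variable {G α : Type*} [Group G] [MulAction G α]

theorem ncard_image_mk_orbitRel_le_relIndex_mul {H K : Subgroup G} (hHK : H.relIndex K ≠ 0)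
    {B : Set α} (hB : B.Finite) :
    (Quotient.mk (orbitRel H α) '' B).ncard ≤
      H.relIndex K * (Quotient.mk (orbitRel K α) '' B).ncard := by
  have : Finite (K ⧸ H.subgroupOf K) := Nat.finite_of_card_ne_zero hHK
  have : Finite (Quotient.mk (orbitRel K α) '' B) := (hB.image _).to_subtype
  let F : (K ⧸ H.subgroupOf K) × (Quotient.mk (orbitRel K α) '' B) → orbitRel.Quotient H α :=
    fun p => Quotient.mk _ (((p.1.out : K) : G)⁻¹ • (p.2 : orbitRel.Quotient K α).out)
  have hsub : Quotient.mk (orbitRel H α) '' B ⊆ Set.range F := by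
    rintro _ ⟨v, hv, rfl⟩
    obtain ⟨k, hk⟩ := Quotient.mk_out (s := orbitRel K α) v
    obtain ⟨h, hh⟩ := QuotientGroup.mk_out_eq_mul (H.subgroupOf K) k
    refine ⟨(QuotientGroup.mk k, ⟨_, v, hv, rfl⟩), Quotient.sound ⟨⟨(h : G)⁻¹, H.inv_mem h.2⟩, ?_⟩⟩
    simp only [hh, ← hk, Subgroup.coe_mul, mul_inv_rev, mul_smul, Subgroup.smul_def,
      inv_smul_smul]
  calc (Quotient.mk (orbitRel H α) '' B).ncard ≤ (Set.range F).ncard :=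
        Set.ncard_le_ncard hsub (Set.finite_range F)
    _ ≤ Nat.card ((K ⧸ H.subgroupOf K) × (Quotient.mk (orbitRel K α) '' B)) :=
        Finite.card_range_le F
    _ = H.relIndex K * (Quotient.mk (orbitRel K α) '' B).ncard := Nat.card_prod _ _

theorem orbitRel_map_conj_iff (H : Subgroup G) (g : G) (a b : α) :
    orbitRel (H.map (MulAut.conj g).toMonoidHom) α a b ↔ orbitRel H α (g⁻¹ • a) (g⁻¹ • b) := by
  simp only [orbitRel_apply, mem_orbit_iff, Subtype.exists, Subgroup.mem_map, Subgroup.mk_smul]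
  constructor
  · rintro ⟨_, ⟨x, hx, rfl⟩, hb⟩
    exact ⟨x, hx, by simp [← hb, mul_smul]⟩
  · rintro ⟨x, hx, hb⟩
    refine ⟨_, ⟨x, hx, rfl⟩, ?_⟩
    simp [mul_smul, hb]

theorem ncard_image_mk_orbitRel_map_conj (H : Subgroup G) (g : G) (B : Set α) :
    (Quotient.mk (orbitRel (H.map (MulAut.conj g).toMonoidHom) α) '' B).ncard =
      (Quotient.mk (orbitRel H α) '' ((g⁻¹ • ·) '' B)).ncard := by
  let e := Quotient.congr (MulAction.toPerm (β := α) g⁻¹) (orbitRel_map_conj_iff H g)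
  rw [← Set.ncard_image_of_injective _ e.injective, Set.image_image, Set.image_image]
  rfl

end OrbitCount

namespace SimpleGraph

variable {V W : Type*} {G : SimpleGraph V} {G' : SimpleGraph W}

theorem Iso.dist_le (φ : G ≃g G') (u v : V) : G'.dist (φ u) (φ v) ≤ G.dist u v := by
  by_cases huv : G.Reachable u v
  · obtain ⟨p, hp⟩ := huv.exists_walk_length_eq_dist
    calc G'.dist (φ u) (φ v) ≤ (p.map φ.toHom).length := SimpleGraph.dist_le _
      _ = G.dist u v := by rw [Walk.length_map, hp]
  · have : ¬G'.Reachable (φ u) (φ v) := fun h => huv (by simpa using h.map φ.symm.toHom)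
    simp [dist_eq_zero_of_not_reachable this]

theorem Iso.dist_eq (φ : G ≃g G') (u v : V) : G'.dist (φ u) (φ v) = G.dist u v :=
  (φ.dist_le u v).antisymm (by simpa using φ.symm.dist_le (φ u) (φ v))

theorem dist_apply_of_mem_autGroup {f : Equiv.Perm V} (hf : f ∈ G.autGroup) (u v : V) :
    G.dist (f u) (f v) = G.dist u v :=
  Iso.dist_eq ⟨f, hf _ _⟩ u v

theorem image_setOf_dist_le_of_mem_autGroup {f : Equiv.Perm V} (hf : f ∈ G.autGroup) (x₀ : V)
    (k : ℕ) : f '' {v | G.dist v x₀ ≤ k} = {v | G.dist v (f x₀) ≤ k} := by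
  ext v
  rw [f.image_eq_preimage_symm, Set.mem_preimage, Set.mem_ofPred_eq, Set.mem_ofPred_eq,
    ← dist_apply_of_mem_autGroup hf, Equiv.apply_symm_apply]

theorem setOf_dist_le_succ_subset (hconn : G.Connected) (x₀ : V) (k : ℕ) :
    {v | G.dist v x₀ ≤ k + 1} ⊆ insert x₀ (⋃ u ∈ {u | G.dist u x₀ ≤ k}, G.neighborSet u) := by
  intro v hv
  obtain ⟨p, hp⟩ := hconn.exists_walk_length_eq_dist v x₀
  cases p with
  | nil => exact Set.mem_insert _ _
  | @cons _ u _ hvu q =>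
    refine Set.mem_insert_of_mem _ (Set.mem_biUnion ?_ hvu.symm)
    have : q.length + 1 ≤ k + 1 := by simpa [← hp] using hv
    exact (dist_le q).trans (by omega)

theorem Connected.finite_setOf_dist_le (hconn : G.Connected)
    (hlf : ∀ v : V, (G.neighborSet v).Finite) (x₀ : V) (k : ℕ) :
    {v | G.dist v x₀ ≤ k}.Finite := by
  induction k with
  | zero => simp [hconn.dist_eq_zero_iff]
  | succ k ih =>
    exact ((ih.biUnion fun u _ => hlf u).insert x₀).subset (setOf_dist_le_succ_subset hconn x₀ k)

end SimpleGraph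

theorem GrowthLE.of_le_mul {f g : ℕ → ℕ} (c : ℕ) (h : ∀ k, f k ≤ c * g k) : GrowthLE f g :=
  ⟨c, 0, h⟩

theorem GrowthLE.of_le_shift {f g : ℕ → ℕ} (b : ℕ) (h : ∀ k, f k ≤ g (k + b)) : GrowthLE f g :=
  ⟨1, b, fun k => (h k).trans_eq (one_mul _).symm⟩

theorem GrowthLE.trans {f g h : ℕ → ℕ} (hfg : GrowthLE f g) (hgh : GrowthLE g h) :
    GrowthLE f h := by
  obtain ⟨a, b, hab⟩ := hfg
  obtain ⟨a', b', hab'⟩ := hgh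
  refine ⟨a * a', b + b', fun k => ?_⟩
  calc f k ≤ a * g (k + b) := hab k
    _ ≤ a * (a' * h (k + b + b')) := Nat.mul_le_mul_left a (hab' (k + b))
    _ = a * a' * h (k + (b + b')) := by rw [mul_assoc, add_assoc]

theorem GrowthEquiv.trans {f g h : ℕ → ℕ} (hfg : GrowthEquiv f g) (hgh : GrowthEquiv g h) :
    GrowthEquiv f h :=
  ⟨hfg.1.trans hgh.1, hgh.2.trans hfg.2⟩

section QuotientGrowth

variable {V : Type*} {G : SimpleGraph V}

theorem quotientGrowth_eq_ncard (G : SimpleGraph V) (Γ : Subgroup (Equiv.Perm V)) (x₀ : V)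
    (k : ℕ) :
    quotientGrowth G Γ x₀ k = (Quotient.mk (orbitRel Γ V) '' {v | G.dist v x₀ ≤ k}).ncard := by
  rw [← Nat.card_coe_set_eq]
  exact Nat.card_congr (Equiv.subtypeEquivRight fun O => by simp [and_comm])

theorem quotientGrowth_le_relIndex_mul (hconn : G.Connected)
    (hlf : ∀ v : V, (G.neighborSet v).Finite) {Γ Γ' : Subgroup (Equiv.Perm V)}
    (hΓ : Γ.relIndex Γ' ≠ 0) (x₀ : V) (k : ℕ) :
    quotientGrowth G Γ x₀ k ≤ Γ.relIndex Γ' * quotientGrowth G Γ' x₀ k := by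
  simp only [quotientGrowth_eq_ncard]
  exact ncard_image_mk_orbitRel_le_relIndex_mul hΓ (hconn.finite_setOf_dist_le hlf x₀ k)

theorem growthEquiv_quotientGrowth_of_commensurable (hconn : G.Connected)
    (hlf : ∀ v : V, (G.neighborSet v).Finite) {Γ Γ' : Subgroup (Equiv.Perm V)}
    (hc : Γ.Commensurable Γ') (x₀ : V) :
    GrowthEquiv (quotientGrowth G Γ x₀) (quotientGrowth G Γ' x₀) :=
  ⟨.of_le_mul _ (quotientGrowth_le_relIndex_mul hconn hlf hc.1 x₀),
    .of_le_mul _ (quotientGrowth_le_relIndex_mul hconn hlf hc.2 x₀)⟩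

theorem quotientGrowth_le_add_dist (hconn : G.Connected)
    (hlf : ∀ v : V, (G.neighborSet v).Finite) (Γ : Subgroup (Equiv.Perm V)) (x₀ x₁ : V)
    (k : ℕ) :
    quotientGrowth G Γ x₁ k ≤ quotientGrowth G Γ x₀ (k + G.dist x₁ x₀) := by
  simp only [quotientGrowth_eq_ncard]
  refine Set.ncard_le_ncard (Set.image_mono fun v hv => ?_)
    ((hconn.finite_setOf_dist_le hlf x₀ _).image _)
  exact hconn.dist_triangle.trans (Nat.add_le_add_right hv _)

theorem growthEquiv_quotientGrowth_basepoint (hconn : G.Connected)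
    (hlf : ∀ v : V, (G.neighborSet v).Finite) (Γ : Subgroup (Equiv.Perm V)) (x₀ x₁ : V) :
    GrowthEquiv (quotientGrowth G Γ x₀) (quotientGrowth G Γ x₁) :=
  ⟨.of_le_shift _ (quotientGrowth_le_add_dist hconn hlf Γ x₁ x₀),
    .of_le_shift _ (quotientGrowth_le_add_dist hconn hlf Γ x₀ x₁)⟩

theorem quotientGrowth_map_conj {g : Equiv.Perm V} (hg : g ∈ G.autGroup)
    (Γ : Subgroup (Equiv.Perm V)) (x₀ : V) :
    quotientGrowth G (Γ.map (MulAut.conj g).toMonoidHom) x₀ = quotientGrowth G Γ (g⁻¹ x₀) := by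
  funext k
  rw [quotientGrowth_eq_ncard, quotientGrowth_eq_ncard, ncard_image_mk_orbitRel_map_conj]
  congr 2
  exact image_setOf_dist_le_of_mem_autGroup (G.autGroup.inv_mem hg) x₀ k

end QuotientGrowth

theorem statement8_general {V : Type u} (G : SimpleGraph V)
    (hconn : G.Connected)
    (hlf : ∀ v : V, (G.neighborSet v).Finite) (x₀ : V)
    (Γ Γ' : Subgroup (Equiv.Perm V))
    (hcomm : CommensurableIn G.autGroup Γ Γ') :
    GrowthEquiv (fun k => quotientGrowth G Γ x₀ k)
      (fun k => quotientGrowth G Γ' x₀ k) := by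
  obtain ⟨g, hg, hc⟩ := hcomm
  refine (growthEquiv_quotientGrowth_basepoint hconn hlf Γ x₀ (g⁻¹ x₀)).trans ?_
  rw [← quotientGrowth_map_conj hg]
  exact growthEquiv_quotientGrowth_of_commensurable hconn hlf hc x₀

/-- If `X` is a locally finite tree and `Γ, Γ'` are commensurable
lattices in `Aut X`, then their quotient growth functions (number of orbits of
vertices meeting the ball of radius `k` about a fixed basepoint `x₀`) are
equivalent. -/
theorem statement8 {V : Type u} (G : SimpleGraph V)
    (hconn : G.Connected) (hacyc : G.IsAcyclic)
    (hlf : ∀ v : V, (G.neighborSet v).Finite) (x₀ : V)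
    (Γ Γ' : Subgroup (Equiv.Perm V))
    (hΓ : Γ ≤ G.autGroup) (hΓ' : Γ' ≤ G.autGroup)
    (hlat : IsGraphLattice Γ) (hlat' : IsGraphLattice Γ')
    (hcomm : CommensurableIn G.autGroup Γ Γ') :
    GrowthEquiv (fun k => quotientGrowth G Γ x₀ k)
      (fun k => quotientGrowth G Γ' x₀ k) :=
  statement8_general G hconn hlf x₀ Γ Γ' hcomm
end

section
/- Let m ≥ 3 be an integer and let f : ℕ → ℕ satisfy f(0) = 1 and 1 ≤ f(j+1) ≤ 2·f(j) for all j. Then there exists a star tree A of degree m with basepoint v₀ ∈ V₀(A) such that for every j ≥ 0 the number of vertices of V₀(A) at level j is exactly f(j), and such that at least one vertex of V₁(A) of degree 1 is adjacent to v₀. -/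
open SimpleGraph MulAction
open scoped ENNReal

universe u

variable {V : Type u}

/-! Build the tree level by level: the basepoint carries `m` edges and every other
`V₀`-vertex `m - 1` edges pointing away from the basepoint; the `x`-th vertex of level `j + 1`
is attached to the edge `x % 2` of the vertex `x / 2` of level `j`, which is possible because
`f (j + 1) ≤ 2 f j`, and every edge not used this way ends in a leaf. Vertices and edges of
level `j` get depths `2 j` and `2 j + 1`. Every edge changes the depth by one and every vertex
but the basepoint has exactly one neighbour of smaller depth; this makes the graph a tree in
which the depth is the distance to the basepoint. Since `m ≥ 3`, the edge `2` of the basepoint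
is a leaf. -/

lemma Set.finite_and_ncard_eq_of_encard_eq {α : Type*} {s : Set α} {n : ℕ} (h : s.encard = n) :
    s.Finite ∧ s.ncard = n :=
  ⟨Set.finite_of_encard_eq_coe h, by rw [Set.ncard_def, h, ENat.toNat_natCast]⟩

namespace SimpleGraph

variable {W : Type*} {G : SimpleGraph W} {depth : W → ℕ}

structure IsRootedDepth (G : SimpleGraph W) (depth : W → ℕ) : Prop where
  adj : ∀ ⦃u v⦄, G.Adj u v → depth u + 1 = depth v ∨ depth v + 1 = depth u
  existsUnique_lower : ∀ v, depth v ≠ 0 → ∃! u, G.Adj v u ∧ depth u + 1 = depth v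

def upperNeighborSet (G : SimpleGraph W) (depth : W → ℕ) (v : W) : Set W :=
  {u | G.Adj v u ∧ depth v + 1 = depth u}

namespace IsRootedDepth

theorem depth_le_depth_add_length (h : G.IsRootedDepth depth) {u v : W} (p : G.Walk u v) :
    depth u ≤ depth v + p.length := by
  induction p with
  | nil => simp
  | cons huv _ ih => have := h.adj huv; rw [Walk.length_cons]; omega

theorem exists_walk_length_eq_depth (h : G.IsRootedDepth depth) {r : W}
    (hroot : ∀ v, depth v = 0 ↔ v = r) (v : W) : ∃ p : G.Walk v r, p.length = depth v := by
  induction hv : depth v using Nat.strong_induction_on generalizing v with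
  | _ n ih =>
    obtain rfl | hn := Nat.eq_zero_or_pos n
    · obtain rfl := (hroot v).1 hv
      exact ⟨.nil, rfl⟩
    obtain ⟨u, ⟨hvu, hu⟩, -⟩ := h.existsUnique_lower v (by omega)
    obtain ⟨p, hp⟩ := ih (depth u) (by omega) u rfl
    exact ⟨.cons hvu p, by rw [Walk.length_cons]; omega⟩

theorem connected (h : G.IsRootedDepth depth) {r : W} (hroot : ∀ v, depth v = 0 ↔ v = r) :
    G.Connected := by
  have : Nonempty W := ⟨r⟩
  refine ⟨fun u v => ?_⟩
  obtain ⟨p, -⟩ := h.exists_walk_length_eq_depth hroot u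
  obtain ⟨q, -⟩ := h.exists_walk_length_eq_depth hroot v
  exact ⟨p.append q.reverse⟩

theorem dist_eq_depth (h : G.IsRootedDepth depth) {r : W} (hroot : ∀ v, depth v = 0 ↔ v = r)
    (v : W) : G.dist v r = depth v := by
  obtain ⟨p, hp⟩ := h.exists_walk_length_eq_depth hroot v
  obtain ⟨q, hq⟩ := p.reachable.exists_walk_length_eq_dist
  have := h.depth_le_depth_add_length q
  have := dist_le p
  have := (hroot r).2 rfl
  omega

/-- On a cycle, a vertex of maximal depth would have two distinct lower neighbours. -/
theorem isAcyclic (h : G.IsRootedDepth depth) : G.IsAcyclic := by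
  classical
  intro v c hc
  obtain ⟨x, hx, hmax⟩ := c.support.toFinset.exists_max_image depth ⟨v, by simp⟩
  rw [List.mem_toFinset] at hx
  have hc' := hc.rotate hx
  have lower : ∀ y ∈ (c.rotate x hx).support, G.Adj x y → depth y + 1 = depth x :=
    fun y hy hxy => (h.adj hxy).resolve_left fun hlt => by
      have := hmax y (by simpa using hy); omega
  have hsnd := lower _ (Walk.getVert_mem_support _ 1) (Walk.adj_snd hc'.not_nil)
  have hpen := lower _ (Walk.getVert_mem_support _ _) (Walk.adj_penultimate hc'.not_nil).symm
  exact hc'.snd_ne_penultimate <| (h.existsUnique_lower x (by omega)).unique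
    ⟨Walk.adj_snd hc'.not_nil, hsnd⟩ ⟨(Walk.adj_penultimate hc'.not_nil).symm, hpen⟩

theorem encard_neighborSet (h : G.IsRootedDepth depth) (v : W) :
    (G.neighborSet v).encard =
      (G.upperNeighborSet depth v).encard + if depth v = 0 then 0 else 1 := by
  have hsplit : G.neighborSet v =
      G.upperNeighborSet depth v ∪ {u | G.Adj v u ∧ depth u + 1 = depth v} := by
    ext u
    simp only [upperNeighborSet, mem_neighborSet, Set.mem_union, Set.mem_ofPred_eq]
    exact ⟨fun hvu => (h.adj hvu).imp (⟨hvu, ·⟩) (⟨hvu, ·⟩),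
      by rintro (⟨hvu, -⟩ | ⟨hvu, -⟩) <;> exact hvu⟩
  have hdisj : Disjoint (G.upperNeighborSet depth v) {u | G.Adj v u ∧ depth u + 1 = depth v} :=
    Set.disjoint_left.2 fun u hu hu' => by have := hu.2; have := hu'.2; omega
  rw [hsplit, Set.encard_union_eq hdisj]
  split_ifs with hv
  · simp [hv]
  · obtain ⟨u, hu, huniq⟩ := h.existsUnique_lower v hv
    congr 1
    rw [Set.encard_eq_one]
    exact ⟨u, Set.ext fun w => ⟨huniq w, fun hw => hw ▸ hu⟩⟩

end IsRootedDepth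

end SimpleGraph

/-- The `V₀`-vertices of level `j` are the `⟨j, x⟩` with `x < f j`; the `V₁`-vertex
`⟨j, i, t⟩` is the `t`-th edge leading from `⟨j, i⟩` away from the basepoint `⟨0, 0⟩`. -/
abbrev StarTreeVertex (f : ℕ → ℕ) (m : ℕ) : Type :=
  (Σ j : ℕ, Fin (f j)) ⊕ (Σ j : ℕ, Fin (f j) × Fin (if j = 0 then m else m - 1))

namespace StarTreeVertex

variable {f : ℕ → ℕ} {m : ℕ}

/-- `Hangs a s`: the edge `s` leaves `a`, or `a` hangs from `s`; the vertex `x` of level `j + 1`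
hangs from the edge `x % 2` of the vertex `x / 2` of level `j`. -/
def Hangs : StarTreeVertex f m → StarTreeVertex f m → Prop
  | .inl ⟨j, x⟩, .inr ⟨k, i, t⟩ =>
      (j = k ∧ (x : ℕ) = i) ∨ (j = k + 1 ∧ (x : ℕ) / 2 = i ∧ (x : ℕ) % 2 = t)
  | _, _ => False

def depth : StarTreeVertex f m → ℕ
  | .inl ⟨j, _⟩ => 2 * j
  | .inr ⟨j, _⟩ => 2 * j + 1

lemma inl_eq_inl {j k : ℕ} {x : Fin (f j)} {y : Fin (f k)} (hj : j = k) (hx : (x : ℕ) = y) :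
    (.inl ⟨j, x⟩ : StarTreeVertex f m) = .inl ⟨k, y⟩ := by
  subst hj
  rw [Fin.ext hx]

lemma inr_eq_inr {j k : ℕ} {i : Fin (f j)} {i' : Fin (f k)}
    {t : Fin (if j = 0 then m else m - 1)} {t' : Fin (if k = 0 then m else m - 1)}
    (hj : j = k) (hi : (i : ℕ) = i') (ht : (t : ℕ) = t') :
    (.inr ⟨j, i, t⟩ : StarTreeVertex f m) = .inr ⟨k, i', t'⟩ := by
  subst hj
  rw [Fin.ext hi, Fin.ext ht]

lemma depth_inr_ne_zero (j : ℕ) (i : Fin (f j)) (t : Fin (if j = 0 then m else m - 1)) :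
    depth (.inr ⟨j, i, t⟩ : StarTreeVertex f m) ≠ 0 :=
  Nat.succ_ne_zero _

lemma depth_eq_zero_iff (hf0 : f 0 = 1) (v : StarTreeVertex f m) :
    depth v = 0 ↔ v = .inl ⟨0, ⟨0, by omega⟩⟩ := by
  constructor
  · rcases v with ⟨j, x⟩ | ⟨j, i, t⟩ <;> intro hv <;> simp only [depth] at hv
    · obtain rfl : j = 0 := by omega
      exact inl_eq_inl rfl (by have := x.isLt; omega)
    · omega
  · rintro rfl
    rfl

end StarTreeVertex

open StarTreeVertex

def starTreeOf (f : ℕ → ℕ) (m : ℕ) : SimpleGraph (StarTreeVertex f m) where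
  Adj u v := Hangs u v ∨ Hangs v u
  symm := ⟨fun _ _ => Or.symm⟩
  loopless := ⟨by rintro (_ | _) (h | h) <;> exact h⟩

section starTreeOf

variable {f : ℕ → ℕ} {m : ℕ}

@[simp]
lemma starTreeOf_adj_inl_inr {j k : ℕ} {x : Fin (f j)} {i : Fin (f k)}
    {t : Fin (if k = 0 then m else m - 1)} :
    (starTreeOf f m).Adj (.inl ⟨j, x⟩) (.inr ⟨k, i, t⟩) ↔
      (j = k ∧ (x : ℕ) = i) ∨ (j = k + 1 ∧ (x : ℕ) / 2 = i ∧ (x : ℕ) % 2 = t) :=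
  Iff.of_eq (or_false _)

@[simp]
lemma starTreeOf_adj_inr_inl {j k : ℕ} {x : Fin (f j)} {i : Fin (f k)}
    {t : Fin (if k = 0 then m else m - 1)} :
    (starTreeOf f m).Adj (.inr ⟨k, i, t⟩) (.inl ⟨j, x⟩) ↔
      (j = k ∧ (x : ℕ) = i) ∨ (j = k + 1 ∧ (x : ℕ) / 2 = i ∧ (x : ℕ) % 2 = t) :=
  Iff.of_eq (false_or _)

@[simp]
lemma starTreeOf_not_adj_inl_inl {a b : Σ j, Fin (f j)} :
    ¬(starTreeOf f m).Adj (.inl a) (.inl b) :=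
  fun h => h.elim id id

@[simp]
lemma starTreeOf_not_adj_inr_inr {a b : Σ j, Fin (f j) × Fin (if j = 0 then m else m - 1)} :
    ¬(starTreeOf f m).Adj (.inr a) (.inr b) :=
  fun h => h.elim id id

lemma isRootedDepth_starTreeOf (hm : 3 ≤ m) (hf : ∀ j, f (j + 1) ≤ 2 * f j) :
    (starTreeOf f m).IsRootedDepth depth where
  adj := by
    rintro (⟨j, x⟩ | ⟨j, i, t⟩) (⟨k, y⟩ | ⟨k, i', t'⟩) h <;> simp [depth] at h ⊢ <;>
      omega
  existsUnique_lower := by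
    rintro (⟨_ | j, x⟩ | ⟨j, i, t⟩) hv
    · simp [depth] at hv
    · have hi : (x : ℕ) / 2 < f j := by have := hf j; omega
      have ht : (x : ℕ) % 2 < if j = 0 then m else m - 1 := by split_ifs <;> omega
      refine ⟨.inr ⟨j, ⟨_, hi⟩, ⟨_, ht⟩⟩, ⟨by simp, by simp [depth]; omega⟩, ?_⟩
      rintro (⟨k, y⟩ | ⟨k, i', t'⟩) ⟨hadj, hd⟩
      · simp at hadj
      · simp only [depth] at hd
        simp only [starTreeOf_adj_inl_inr] at hadj
        exact inr_eq_inr (by omega) (show (i' : ℕ) = (x : ℕ) / 2 by omega)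
          (show (t' : ℕ) = (x : ℕ) % 2 by omega)
    · refine ⟨.inl ⟨j, i⟩, ⟨by simp, by simp [depth]⟩, ?_⟩
      rintro (⟨k, y⟩ | ⟨k, i', t'⟩) ⟨hadj, hd⟩
      · simp only [depth] at hd
        simp only [starTreeOf_adj_inr_inl] at hadj
        exact inl_eq_inl (by omega) (by omega)
      · simp at hadj

lemma upperNeighborSet_starTreeOf_inl (j : ℕ) (x : Fin (f j)) :
    (starTreeOf f m).upperNeighborSet depth (.inl ⟨j, x⟩) =
      Set.range fun t => .inr ⟨j, x, t⟩ := by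
  ext (⟨k, y⟩ | ⟨k, i, t⟩)
  · simp [upperNeighborSet]
  · simp only [upperNeighborSet, Set.mem_ofPred_eq, depth, starTreeOf_adj_inl_inr,
      Set.mem_range]
    constructor
    · rintro ⟨hadj, hd⟩
      obtain rfl : k = j := by omega
      exact ⟨t, inr_eq_inr rfl (by omega) rfl⟩
    · rintro ⟨t', ⟨⟩⟩
      simp

lemma upperNeighborSet_starTreeOf_inr_subsingleton (j : ℕ) (i : Fin (f j))
    (t : Fin (if j = 0 then m else m - 1)) :
    ((starTreeOf f m).upperNeighborSet depth (.inr ⟨j, i, t⟩)).Subsingleton := by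
  rintro (⟨k, y⟩ | _) ⟨hadj, hd⟩ (⟨k', y'⟩ | _) ⟨hadj', hd'⟩ <;> simp at hadj hadj'
  simp only [depth] at hd hd'
  exact inl_eq_inl (by omega) (by omega)

lemma upperNeighborSet_starTreeOf_inr_of_two_le (j : ℕ) (i : Fin (f j))
    (t : Fin (if j = 0 then m else m - 1)) (ht : 2 ≤ (t : ℕ)) :
    (starTreeOf f m).upperNeighborSet depth (.inr ⟨j, i, t⟩) = ∅ := by
  ext (⟨k, y⟩ | _) <;> simp [upperNeighborSet, depth]
  omega

lemma encard_neighborSet_inl (hm : 3 ≤ m) (hf : ∀ j, f (j + 1) ≤ 2 * f j) (j : ℕ)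
    (x : Fin (f j)) : ((starTreeOf f m).neighborSet (.inl ⟨j, x⟩)).encard = m := by
  have hinj : Function.Injective fun t : Fin (if j = 0 then m else m - 1) =>
      (.inr ⟨j, x, t⟩ : StarTreeVertex f m) := by
    rintro t t' ⟨⟩
    rfl
  rw [(isRootedDepth_starTreeOf hm hf).encard_neighborSet, upperNeighborSet_starTreeOf_inl,
    ← Set.image_univ, hinj.encard_image, Set.encard_univ, ENat.card_eq_coe_fintype_card,
    Fintype.card_fin]
  cases j with
  | zero => simp [depth]
  | succ j =>
    rw [if_neg j.succ_ne_zero, if_neg (by simp [depth])]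
    norm_cast
    omega

lemma encard_neighborSet_inr (hm : 3 ≤ m) (hf : ∀ j, f (j + 1) ≤ 2 * f j) (j : ℕ)
    (i : Fin (f j)) (t : Fin (if j = 0 then m else m - 1)) :
    ((starTreeOf f m).neighborSet (.inr ⟨j, i, t⟩)).encard = 1 ∨
      ((starTreeOf f m).neighborSet (.inr ⟨j, i, t⟩)).encard = 2 := by
  rw [(isRootedDepth_starTreeOf hm hf).encard_neighborSet, if_neg (depth_inr_ne_zero j i t)]
  rcases (upperNeighborSet_starTreeOf_inr_subsingleton j i t).eq_empty_or_singleton with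
    h | ⟨u, h⟩
  · left
    rw [h, Set.encard_empty, zero_add]
  · right
    rw [h, Set.encard_singleton]
    rfl

lemma encard_neighborSet_inr_of_two_le (hm : 3 ≤ m) (hf : ∀ j, f (j + 1) ≤ 2 * f j) (j : ℕ)
    (i : Fin (f j)) (t : Fin (if j = 0 then m else m - 1)) (ht : 2 ≤ (t : ℕ)) :
    ((starTreeOf f m).neighborSet (.inr ⟨j, i, t⟩)).encard = 1 := by
  rw [(isRootedDepth_starTreeOf hm hf).encard_neighborSet, if_neg (depth_inr_ne_zero j i t),
    upperNeighborSet_starTreeOf_inr_of_two_le j i t ht, Set.encard_empty, zero_add]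

theorem isStarTree_starTreeOf (hm : 3 ≤ m) (hf0 : f 0 = 1) (hf : ∀ j, f (j + 1) ≤ 2 * f j) :
    IsStarTree (starTreeOf f m) (Set.range Sum.inl) (Set.range Sum.inr) m where
  connected := (isRootedDepth_starTreeOf hm hf).connected (depth_eq_zero_iff hf0)
  acyclic := (isRootedDepth_starTreeOf hm hf).isAcyclic
  disjoint := Set.isCompl_range_inl_range_inr.disjoint
  union := Set.isCompl_range_inl_range_inr.sup_eq_top
  adj_parts := by rintro (_ | _) (_ | _) h <;> simp_all
  degree₀ := by
    rintro _ ⟨⟨j, x⟩, rfl⟩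
    exact Set.finite_and_ncard_eq_of_encard_eq (encard_neighborSet_inl hm hf j x)
  degree₁ := by
    rintro _ ⟨⟨j, i, t⟩, rfl⟩
    rcases encard_neighborSet_inr hm hf j i t with h | h
    · exact (Set.finite_and_ncard_eq_of_encard_eq h).imp_right Or.inl
    · exact (Set.finite_and_ncard_eq_of_encard_eq h).imp_right Or.inr

lemma ncard_level_starTreeOf (hm : 3 ≤ m) (hf0 : f 0 = 1) (hf : ∀ j, f (j + 1) ≤ 2 * f j)
    (j : ℕ) :
    {v | v ∈ Set.range Sum.inl ∧
      (starTreeOf f m).dist v (.inl ⟨0, ⟨0, by omega⟩⟩) = 2 * j}.ncard = f j := by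
  have hlevel : {v | v ∈ Set.range Sum.inl ∧
      (starTreeOf f m).dist v (.inl ⟨0, ⟨0, by omega⟩⟩) = 2 * j} =
      Set.range fun x : Fin (f j) => .inl ⟨j, x⟩ := by
    ext v
    simp only [(isRootedDepth_starTreeOf hm hf).dist_eq_depth (depth_eq_zero_iff hf0),
      Set.mem_ofPred_eq, Set.mem_range]
    constructor
    · rintro ⟨⟨⟨k, x⟩, rfl⟩, hd⟩
      obtain rfl : k = j := by simp only [depth] at hd; omega
      exact ⟨x, rfl⟩
    · rintro ⟨x, rfl⟩
      exact ⟨⟨_, rfl⟩, rfl⟩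
  rw [hlevel, Set.ncard_range_of_injective (fun x y h => by cases h; rfl), Nat.card_fin]

end starTreeOf

/-- For `m ≥ 3` and any `f : ℕ → ℕ` with `f 0 = 1` and
`1 ≤ f (j+1) ≤ 2 f j`, there is a star tree of degree `m` with basepoint `v₀`
having exactly `f j` vertices of `V₀` at level `j` for every `j`, and having a
degree-one `V₁`-vertex adjacent to the basepoint. -/
theorem statement11 {m : ℕ} (hm : 3 ≤ m) {f : ℕ → ℕ} (hf0 : f 0 = 1)
    (hf : ∀ j : ℕ, 1 ≤ f (j + 1) ∧ f (j + 1) ≤ 2 * f j) :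
    ∃ (W : Type) (A : SimpleGraph W) (W₀ W₁ : Set W) (v₀ : W),
      IsStarTree A W₀ W₁ m ∧ v₀ ∈ W₀ ∧
      (∀ j : ℕ, {v : W | v ∈ W₀ ∧ A.dist v v₀ = 2 * j}.ncard = f j) ∧
      (∃ c₀ ∈ W₁, (A.neighborSet c₀).ncard = 1 ∧ A.Adj v₀ c₀) := by
  have hf2 : ∀ j, f (j + 1) ≤ 2 * f j := fun j => (hf j).2
  have h0 : 0 < f 0 := by omega
  have h2 : 2 < if (0 : ℕ) = 0 then m else m - 1 := by rw [if_pos rfl]; omega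
  let c₀ : StarTreeVertex f m := .inr ⟨0, ⟨0, h0⟩, ⟨2, h2⟩⟩
  refine ⟨StarTreeVertex f m, starTreeOf f m, Set.range Sum.inl, Set.range Sum.inr,
    .inl ⟨0, ⟨0, h0⟩⟩, isStarTree_starTreeOf hm hf0 hf2, ⟨_, rfl⟩,
    ncard_level_starTreeOf hm hf0 hf2, c₀, ⟨_, rfl⟩, ?_,
    starTreeOf_adj_inl_inr.2 (Or.inl ⟨rfl, rfl⟩)⟩
  exact (Set.finite_and_ncard_eq_of_encard_eq
    (encard_neighborSet_inr_of_two_le hm hf2 0 _ _ le_rfl)).2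
end

section
/- Let t and n be integers with 2 < t ≤ n, and let λ be a real number with t−1 ≤ λ ≤ n−1. Then there exists a sequence s = (s_k)_{k≥1} with s_k ∈ {t, n} for every k such that the function k ↦ h(k) = (s_1−1)(s_2−1)···(s_k−1) (with h(0)=1) is ≃-equivalent to the function k ↦ ⌈λ^k⌉. -/
open SimpleGraph MulAction
open scoped ENNReal

universe u

variable {V : Type u}

/-!
Choose the factors greedily: `h (k + 1)` is `(n - 1) * h k` if this does not exceed `λ ^ (k + 1)`,
and `(t - 1) * h k` otherwise. Inductively `h k ≤ λ ^ k ≤ (n - 1) * h k`: in the first case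
`λ ^ (k + 1) ≤ λ * (n - 1) * h k ≤ (n - 1) * h (k + 1)`, in the second
`λ ^ (k + 1) < (n - 1) * h k ≤ (n - 1) * h (k + 1)`. So `h k ≤ ⌈λ ^ k⌉ ≤ (n - 1) * h k`.
-/

noncomputable def greedyProd (a b : ℕ) (lam : ℝ) : ℕ → ℕ
  | 0 => 1
  | k + 1 => greedyProd a b lam k *
      if (greedyProd a b lam k : ℝ) * b ≤ lam ^ (k + 1) then b else a

noncomputable def greedyFactor (a b : ℕ) (lam : ℝ) (k : ℕ) : ℕ :=
  if (greedyProd a b lam k : ℝ) * b ≤ lam ^ (k + 1) then b else a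

section Greedy

variable {a b : ℕ} {lam : ℝ}

theorem greedyProd_succ (k : ℕ) :
    greedyProd a b lam (k + 1) = greedyProd a b lam k * greedyFactor a b lam k := rfl

theorem greedyFactor_eq_or (k : ℕ) :
    greedyFactor a b lam k = a ∨ greedyFactor a b lam k = b := by
  unfold greedyFactor
  split_ifs <;> simp

theorem greedyProd_eq_prod_range (k : ℕ) :
    greedyProd a b lam k = ∏ i ∈ Finset.range k, greedyFactor a b lam i := by
  induction k with
  | zero => rfl
  | succ k ih => rw [greedyProd_succ, ih, Finset.prod_range_succ]

theorem greedyProd_le_pow_le_mul (ha : 1 ≤ a) (hal : (a : ℝ) ≤ lam) (hlb : lam ≤ b)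
    (k : ℕ) :
    (greedyProd a b lam k : ℝ) ≤ lam ^ k ∧ lam ^ k ≤ greedyProd a b lam k * b := by
  have ha' : (1 : ℝ) ≤ a := by exact_mod_cast ha
  have hlam : 0 ≤ lam := by linarith
  induction k with
  | zero => simpa [greedyProd] using ha'.trans (hal.trans hlb)
  | succ k ih =>
    obtain ⟨hlow, hup⟩ := ih
    rw [greedyProd_succ, greedyFactor]
    split_ifs with hb
    · push_cast
      exact ⟨hb, by rw [pow_succ]; exact mul_le_mul hup hlb hlam (by positivity)⟩
    · push_cast
      refine ⟨by rw [pow_succ]; exact mul_le_mul hlow hal (by positivity) (pow_nonneg hlam k),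
        ?_⟩
      have hh : (0 : ℝ) ≤ greedyProd a b lam k := Nat.cast_nonneg _
      nlinarith

end Greedy

theorem admProd_pred_add_one (f : ℕ → ℕ) (k : ℕ) :
    admProd (fun i => f (i - 1) + 1) k = ∏ i ∈ Finset.range k, f i := by
  induction k with
  | zero => rfl
  | succ k ih =>
    rw [admProd, Finset.prod_Icc_succ_top (Nat.le_add_left 1 k), ← admProd, ih,
      Finset.prod_range_succ]
    simp

theorem growthEquiv_ceil_of_le_of_le_mul {f : ℕ → ℕ} {x : ℕ → ℝ} {c : ℕ}
    (hlow : ∀ k, (f k : ℝ) ≤ x k) (hup : ∀ k, x k ≤ f k * c) :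
    GrowthEquiv f fun k => ⌈x k⌉₊ := by
  refine ⟨⟨1, 0, fun k => ?_⟩, ⟨c, 0, fun k => ?_⟩⟩
  · simpa using Nat.cast_le.mp ((hlow k).trans (Nat.le_ceil _))
  · exact Nat.ceil_le.mpr (by simpa [mul_comm] using hup k)

/-- For integers `2 < t ≤ n` and any real `λ` with
`t - 1 ≤ λ ≤ n - 1`, there is a sequence `s` with `s k ∈ {t, n}` for all `k ≥ 1`
such that `k ↦ (s 1 - 1) ⋯ (s k - 1)` is equivalent to `k ↦ ⌈λ ^ k⌉`. -/
theorem statement15 {t n : ℕ} (ht : 2 < t) (htn : t ≤ n) {lam : ℝ}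
    (h1 : (t : ℝ) - 1 ≤ lam) (h2 : lam ≤ (n : ℝ) - 1) :
    ∃ s : ℕ → ℕ, (∀ k : ℕ, 1 ≤ k → s k = t ∨ s k = n) ∧
      GrowthEquiv (admProd s) (fun k => ⌈lam ^ k⌉₊) := by
  have hbounds :=
    greedyProd_le_pow_le_mul (a := t - 1) (b := n - 1) (lam := lam) (by omega)
      (by rwa [Nat.cast_pred (by omega)]) (by rwa [Nat.cast_pred (by omega)])
  refine ⟨fun k => greedyFactor (t - 1) (n - 1) lam (k - 1) + 1, fun k _ => ?_, ?_⟩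
  · rcases greedyFactor_eq_or (a := t - 1) (b := n - 1) (lam := lam) (k - 1) with h | h <;>
      simp only [h] <;> omega
  · have hprod : admProd (fun k => greedyFactor (t - 1) (n - 1) lam (k - 1) + 1) =
        greedyProd (t - 1) (n - 1) lam :=
      funext fun k => by rw [admProd_pred_add_one, greedyProd_eq_prod_range]
    rw [hprod]
    exact growthEquiv_ceil_of_le_of_le_mul (fun k => (hbounds k).1) (fun k => (hbounds k).2)
end

section
/- Let (h_j)_{j≥0} be a sequence of positive integers with h_0 = 1 and 2 ≤ h_{j+1}/h_j ≤ c for all j, for some constant c. Then for every real number ρ > 0 there exists a bounded sequence e : {1,2,3,...} → ℕ such that Σ_{j≥1} e_j / h_j = ρ. -/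
open SimpleGraph MulAction
open scoped ENNReal

universe u

variable {V : Type u}

open Filter in
noncomputable def s18rem (h : ℕ → ℕ) (ρ : ℝ) : ℕ → ℝ
  | 0 => ρ
  | (j+1) => s18rem h ρ j - (⌊s18rem h ρ j * h (j+1)⌋ : ℝ) / h (j+1)

section
open Filter

/-- Let `(h_j)` be a sequence of positive integers with `h 0 = 1`
and `2 ≤ h (j+1) / h j ≤ c` for all `j`. Then for every real `ρ > 0` there is a
bounded sequence `e : {1,2,…} → ℕ` with `∑_{j ≥ 1} e_j / h_j = ρ`. -/
theorem statement18 {h : ℕ → ℕ} {c : ℕ} (hpos : ∀ j : ℕ, 0 < h j) (h0 : h 0 = 1)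
    (hgrow : ∀ j : ℕ, 2 * h j ≤ h (j + 1) ∧ h (j + 1) ≤ c * h j)
    {ρ : ℝ} (hρ : 0 < ρ) :
    ∃ e : ℕ+ → ℕ, (∃ M : ℕ, ∀ j : ℕ+, e j ≤ M) ∧
      ∑' j : ℕ+, (e j : ℝ) / (h (j : ℕ) : ℝ) = ρ := by
  have hposR : ∀ j : ℕ, (0 : ℝ) < h j := fun j => by exact_mod_cast hpos j
  have hnn : ∀ n, 0 ≤ s18rem h ρ n := by
    intro n
    induction n with
    | zero => exact hρ.le
    | succ n ih =>
      have hle : (⌊s18rem h ρ n * h (n+1)⌋ : ℝ) / h (n+1) ≤ s18rem h ρ n := by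
        rw [div_le_iff₀ (hposR (n+1))]
        exact Int.floor_le _
      simpa [s18rem] using sub_nonneg.mpr hle
  have hsmall : ∀ n, s18rem h ρ (n+1) * h (n+1) < 1 := by
    intro n
    have hne : (h (n+1) : ℝ) ≠ 0 := (hposR (n+1)).ne'
    have heq : s18rem h ρ (n+1) * h (n+1)
        = s18rem h ρ n * h (n+1) - ⌊s18rem h ρ n * h (n+1)⌋ := by
      simp only [s18rem]; field_simp
    rw [heq]
    linarith [Int.sub_one_lt_floor (s18rem h ρ n * h (n+1))]
  have hfloornn : ∀ n, (0:ℤ) ≤ ⌊s18rem h ρ n * h (n+1)⌋ :=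
    fun n => Int.floor_nonneg.mpr (mul_nonneg (hnn n) (hposR (n+1)).le)
  set g : ℕ → ℝ := fun n => ((⌊s18rem h ρ n * h (n+1)⌋).toNat : ℝ) / h (n+1) with hg
  have hgcast : ∀ n, g n = (⌊s18rem h ρ n * h (n+1)⌋ : ℝ) / h (n+1) := by
    intro n
    have : ((⌊s18rem h ρ n * h (n+1)⌋.toNat : ℕ) : ℝ)
        = ((⌊s18rem h ρ n * h (n+1)⌋ : ℤ) : ℝ) := by
      exact_mod_cast congrArg (Int.cast : ℤ → ℝ) (Int.toNat_of_nonneg (hfloornn n))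
    rw [hg]; dsimp only; rw [this]
  have hgnn : ∀ n, 0 ≤ g n := fun n => by positivity
  have hpartial : ∀ n, ∑ i ∈ Finset.range n, g i = ρ - s18rem h ρ n := by
    intro n
    induction n with
    | zero => simp [s18rem]
    | succ n ih =>
      rw [Finset.sum_range_succ, ih, hgcast]
      simp [s18rem]; ring
  have hge : ∀ n, (2:ℕ)^n ≤ h n := by
    intro n
    induction n with
    | zero => simp [h0]
    | succ n ih =>
      calc (2:ℕ)^(n+1) = 2 * 2^n := by ring
      _ ≤ 2 * h n := by omega
      _ ≤ h (n+1) := (hgrow n).1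
  have hlt : ∀ n, s18rem h ρ (n+1) < 1 / h (n+1) := by
    intro n
    rw [lt_div_iff₀ (hposR (n+1))]
    simpa using hsmall n
  have htend : Tendsto (fun n => s18rem h ρ n) atTop (nhds 0) := by
    have hub : ∀ n, s18rem h ρ (n+1) ≤ (1/2)^(n+1) := by
      intro n
      have h2 : (2:ℝ)^(n+1) ≤ h (n+1) := by exact_mod_cast hge (n+1)
      refine le_of_lt ?_
      calc s18rem h ρ (n+1) < 1 / h (n+1) := hlt n
        _ ≤ 1 / 2^(n+1) := one_div_le_one_div_of_le (by positivity) h2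
        _ = (1/2)^(n+1) := by rw [one_div_pow]
    have hub' : ∀ᶠ n in atTop, s18rem h ρ n ≤ (1/2)^n := by
      filter_upwards [eventually_ge_atTop 1] with n hn
      obtain ⟨m, rfl⟩ := Nat.exists_eq_succ_of_ne_zero (Nat.one_le_iff_ne_zero.mp hn)
      exact hub m
    have hpow : Tendsto (fun n : ℕ => ((1:ℝ)/2)^n) atTop (nhds 0) :=
      tendsto_pow_atTop_nhds_zero_of_lt_one (by norm_num) (by norm_num)
    exact squeeze_zero' (Eventually.of_forall hnn) hub' hpow
  have hsum : HasSum g ρ := by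
    rw [hasSum_iff_tendsto_nat_of_nonneg hgnn]
    simp only [hpartial]
    simpa using (tendsto_const_nhds (x := ρ)).sub htend
  refine ⟨fun j => (⌊s18rem h ρ ((j:ℕ)-1) * h j⌋).toNat, ⟨max (⌊ρ * h 1⌋).toNat c, ?_⟩, ?_⟩
  · intro j
    obtain ⟨n, rfl⟩ : ∃ n : ℕ, j = n.succPNat := ⟨PNat.natPred j, (PNat.succPNat_natPred j).symm⟩
    have hn1 : (n.succPNat : ℕ) - 1 = n := by simp [Nat.succPNat]
    have hn2 : (n.succPNat : ℕ) = n + 1 := rfl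
    rcases Nat.eq_zero_or_pos n with rfl | hn
    · refine le_max_of_le_left ?_
      simp only [hn1, hn2, s18rem]
      norm_num
      exact Or.inl le_rfl
    · refine le_max_of_le_right ?_
      obtain ⟨m, rfl⟩ := Nat.exists_eq_succ_of_ne_zero hn.ne'
      have hne : (h (m+1) : ℝ) ≠ 0 := (hposR (m+1)).ne'
      have hc : (h (m+1+1):ℝ) ≤ c * h (m+1) := by exact_mod_cast (hgrow (m+1)).2
      have hbig : s18rem h ρ (m+1) * h (m+1+1) < c := by
        calc s18rem h ρ (m+1) * h (m+1+1) < (1 / h (m+1)) * h (m+1+1) :=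
              mul_lt_mul_of_pos_right (hlt m) (hposR _)
          _ ≤ (1 / h (m+1)) * (c * h (m+1)) :=
              mul_le_mul_of_nonneg_left hc (by positivity)
          _ = c := by field_simp
      have h1 : (⌊s18rem h ρ (m+1) * h (m+1+1)⌋ : ℝ) < c := (Int.floor_le _).trans_lt hbig
      have h2 : ⌊s18rem h ρ (m+1) * h (m+1+1)⌋ < (c:ℤ) := by exact_mod_cast h1
      dsimp only
      rw [hn1, hn2]
      exact Int.toNat_le.mpr h2.le
  · have key : HasSum (fun j : ℕ+ =>
        (((⌊s18rem h ρ ((j:ℕ)-1) * h j⌋).toNat : ℝ) / (h (j:ℕ) : ℝ))) ρ := by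
      apply (Equiv.pnatEquivNat.symm.hasSum_iff).mp
      convert hsum using 1
      ext n; simp [hg]
    exact key.tsum_eq

end
end
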